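/- arXiv:2406.02985 — 4 statements merged into one kernel-verified Lean document; each statement's English description precedes it below -/
import Mathlib

section
/- Let φ, X : ℝ → ℝ be defined by φ(x) = exp(-1/x²) for x ≠ 0, φ(0) = 0, and X(x) = (2/x³)exp(-1/x²) for x < 0, X(0) = 0, X(x) = (1/x³)exp(-1/x²) for x > 0. Then there exists a continuous positive function δ : ℝ → ℝ such that φ'(x)·X(x) ≥ δ(x)·(X(x)² + φ'(x)²) for all x ∈ ℝ. -/
open Real

private lemma phi_eq : (fun x : ℝ => if x = 0 then 0 else Real.exp (-1 / x ^ 2))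
    = fun x : ℝ => expNegInvGlue (x ^ 2) := by
  funext x
  by_cases hx : x = 0
  · simp [hx, expNegInvGlue.zero]
  · have h2 : (0:ℝ) < x ^ 2 := by positivity
    simp [hx, expNegInvGlue, not_le.2 h2, neg_div, one_div]

private lemma deriv_phi_zero :
    deriv (fun x : ℝ => if x = 0 then 0 else Real.exp (-1 / x ^ 2)) 0 = 0 := by
  rw [phi_eq]
  have hg : DifferentiableAt ℝ expNegInvGlue (0:ℝ) :=
    (expNegInvGlue.contDiff (n := 1)).differentiable (by norm_num) _
  have hf : DifferentiableAt ℝ (fun x : ℝ => x ^ 2) 0 := by fun_prop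
  have := deriv_comp_of_eq (h₂ := expNegInvGlue) (h := fun x : ℝ => x ^ 2) (x := 0)
    hg hf (by norm_num)
  rw [show (fun x : ℝ => expNegInvGlue (x ^ 2)) = expNegInvGlue ∘ (fun x : ℝ => x ^ 2)
      from rfl, this]
  simp

private lemma deriv_phi_ne {x : ℝ} (hx : x ≠ 0) :
    deriv (fun x : ℝ => if x = 0 then 0 else Real.exp (-1 / x ^ 2)) x
      = (2 / x ^ 3) * Real.exp (-1 / x ^ 2) := by
  have hev : (fun x : ℝ => if x = 0 then 0 else Real.exp (-1 / x ^ 2))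
      =ᶠ[nhds x] fun x : ℝ => Real.exp (-1 / x ^ 2) := by
    filter_upwards [isOpen_ne.mem_nhds (by simpa using hx : x ∈ {y : ℝ | y ≠ 0})] with y hy
    simp [hy]
  rw [hev.deriv_eq]
  have hx2 : (x:ℝ) ^ 2 ≠ 0 := pow_ne_zero _ hx
  have h1 : HasDerivAt (fun y : ℝ => -1 / y ^ 2)
      ((0 * x ^ 2 - (-1) * (2 * x ^ 1)) / (x ^ 2) ^ 2) x :=
    (hasDerivAt_const x (-1:ℝ)).div (hasDerivAt_pow 2 x) hx2
  have h2 := (Real.hasDerivAt_exp (-1 / x ^ 2)).comp x h1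
  have h3 : HasDerivAt (fun y : ℝ => Real.exp (-1 / y ^ 2))
      (Real.exp (-1 / x ^ 2) * ((0 * x ^ 2 - (-1) * (2 * x ^ 1)) / (x ^ 2) ^ 2)) x := h2
  rw [h3.deriv]
  field_simp
  ring

theorem flat_example_satisfies_Lyapunov :
    let φ : ℝ → ℝ := fun x => if x = 0 then 0 else Real.exp (-1 / x ^ 2)
    let X : ℝ → ℝ := fun x =>
      if x < 0 then (2 / x ^ 3) * Real.exp (-1 / x ^ 2)
      else if x = 0 then 0 else (1 / x ^ 3) * Real.exp (-1 / x ^ 2)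
    ∃ δ : ℝ → ℝ, Continuous δ ∧ (∀ x, 0 < δ x) ∧
      ∀ x : ℝ, deriv φ x * X x ≥ δ x * ((X x) ^ 2 + (deriv φ x) ^ 2) := by
  intro φ X
  refine ⟨fun _ => 1/5, continuous_const, fun _ => by norm_num, fun x => ?_⟩
  rcases lt_trichotomy x 0 with hx | hx | hx
  · have hd := deriv_phi_ne hx.ne
    show deriv φ x * X x ≥ _
    simp only [X, hx, if_pos, hd]
    set a := (2 / x ^ 3) * Real.exp (-1 / x ^ 2)
    nlinarith [sq_nonneg a]
  · subst hx
    show deriv φ 0 * X 0 ≥ _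
    rw [show deriv φ 0 = 0 from deriv_phi_zero]
    simp [X]
  · have hd := deriv_phi_ne hx.ne'
    show deriv φ x * X x ≥ _
    simp only [X, not_lt.2 hx.le, if_neg, hx.ne', if_false, hd]
    have he : (2 / x ^ 3) * Real.exp (-1 / x ^ 2)
        = 2 * ((1 / x ^ 3) * Real.exp (-1 / x ^ 2)) := by ring
    rw [show deriv φ x = _ from hd, he]
    set a := (1 / x ^ 3) * Real.exp (-1 / x ^ 2)
    nlinarith [sq_nonneg a]
end

section
/- Let φ, X : ℝ → ℝ with φ(x) = exp(-1/x²) for x ≠ 0, φ(0) = 0, and X(x) = (2/x³)exp(-1/x²) for x < 0, X(0) = 0, X(x) = (1/x³)exp(-1/x²) for x > 0. Then there is no continuous function g : ℝ → ℝ with g(x) > 0 for all x such that φ'(x) = g(x)·X(x) for all x ∈ ℝ. -/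
/-!
Away from the origin both `φ'` and `X` are multiples of `u(x) = x⁻³ exp(-1/x²) ≠ 0`:
`φ' = 2u` everywhere, while `X = 2u` on the left and `X = u` on the right. So `φ' = g X`
forces `g = 1` on `(-∞, 0)` and `g = 2` on `(0, ∞)`, and `g` cannot be continuous at `0`.
-/

open Set

lemma ContinuousAt.eq_const_of_mem_closure {α β : Type*} [TopologicalSpace α] [TopologicalSpace β]
    [T1Space β] {f : α → β} {s : Set α} {a : α} {c : β} (hf : ContinuousAt f a)
    (ha : a ∈ closure s) (hs : ∀ x ∈ s, f x = c) : f a = c := by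
  have hsub : f '' s ⊆ {c} := by
    rintro _ ⟨x, hx, rfl⟩
    exact hs x hx
  simpa using closure_mono hsub (hf.continuousWithinAt.mem_closure_image ha)

lemma hasDerivAt_exp_neg_inv_sq {x : ℝ} (hx : x ≠ 0) :
    HasDerivAt (fun y : ℝ => Real.exp (-1 / y ^ 2))
      (2 * (1 / x ^ 3 * Real.exp (-1 / x ^ 2))) x := by
  have hpow : HasDerivAt (fun y : ℝ => -1 / y ^ 2) (2 / x ^ 3) x := by
    refine ((hasDerivAt_const x (-1 : ℝ)).div (hasDerivAt_pow 2 x)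
      (pow_ne_zero 2 hx)).congr_deriv ?_
    field_simp
    ring
  exact hpow.exp.congr_deriv (by ring)

lemma hasDerivAt_flat {x : ℝ} (hx : x ≠ 0) :
    HasDerivAt (fun y : ℝ => if y = 0 then 0 else Real.exp (-1 / y ^ 2))
      (2 * (1 / x ^ 3 * Real.exp (-1 / x ^ 2))) x := by
  refine (hasDerivAt_exp_neg_inv_sq hx).congr_of_eventuallyEq ?_
  filter_upwards [eventually_ne_nhds hx] with y hy
  simp [hy]

lemma one_div_pow_three_mul_exp_ne_zero {x : ℝ} (hx : x ≠ 0) :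
    1 / x ^ 3 * Real.exp (-1 / x ^ 2) ≠ 0 :=
  mul_ne_zero (one_div_ne_zero (pow_ne_zero 3 hx)) (Real.exp_ne_zero _)

theorem flat_example_not_gradlike :
    let φ : ℝ → ℝ := fun x => if x = 0 then 0 else Real.exp (-1 / x ^ 2)
    let X : ℝ → ℝ := fun x =>
      if x < 0 then (2 / x ^ 3) * Real.exp (-1 / x ^ 2)
      else if x = 0 then 0 else (1 / x ^ 3) * Real.exp (-1 / x ^ 2)
    ¬ ∃ g : ℝ → ℝ, Continuous g ∧ (∀ x, 0 < g x) ∧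
      ∀ x : ℝ, deriv φ x = g x * X x := by
  intro φ X
  rintro ⟨g, hg, -, hder⟩
  set u : ℝ → ℝ := fun x => 1 / x ^ 3 * Real.exp (-1 / x ^ 2)
  have hφ' : ∀ x ≠ 0, deriv φ x = 2 * u x := fun x hx => (hasDerivAt_flat hx).deriv
  have hleft : ∀ x ∈ Iio (0 : ℝ), g x = 1 := fun x (hx : x < 0) => by
    have hX : X x = 2 * u x := by simp only [X, u, if_pos hx]; ring
    have h := hder x
    rw [hφ' x hx.ne, hX] at h
    exact (mul_eq_right₀ (mul_ne_zero two_ne_zero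
      (one_div_pow_three_mul_exp_ne_zero hx.ne))).mp h.symm
  have hright : ∀ x ∈ Ioi (0 : ℝ), g x = 2 := fun x (hx : 0 < x) => by
    have hX : X x = u x := by simp [X, u, not_lt.mpr hx.le, hx.ne']
    have h := hder x
    rw [hφ' x hx.ne', hX] at h
    exact (mul_right_cancel₀ (one_div_pow_three_mul_exp_ne_zero hx.ne') h).symm
  have h1 : g 0 = 1 := hg.continuousAt.eq_const_of_mem_closure (by simp) hleft
  have h2 : g 0 = 2 := hg.continuousAt.eq_const_of_mem_closure (by simp) hright
  norm_num [h1] at h2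
end

section
/- Let φ(x,y) = (1/4)(x⁴ + y⁴) and X(x,y) = (x³ + x²y², y³) on ℝ². Then there is no smooth map G : ℝ² → Mat₂(ℝ) defined on a neighborhood of the origin with G(p) positive definite as a bilinear form (i.e. ⟨G(p)v,v⟩ > 0 for v ≠ 0) such that G(p)·X(p) = ∇φ(p) for all p in that neighborhood. -/
noncomputable section EliashbergAux

private def pv (a b : ℝ) : EuclideanSpace ℝ (Fin 2) :=
  (WithLp.equiv 2 (Fin 2 → ℝ)).symm ![a, b]

private lemma pv_decomp (a b : ℝ) : pv a b = a • pv 1 0 + b • pv 0 1 := by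
  ext i; fin_cases i <;> simp [pv]

private lemma hasDerivAt_comp_line {f : EuclideanSpace ℝ (Fin 2) → ℝ}
    (hf : DifferentiableAt ℝ f 0) (w : EuclideanSpace ℝ (Fin 2)) :
    HasDerivAt (fun t : ℝ => f (t • w)) (fderiv ℝ f 0 w) 0 := by
  have hc : HasDerivAt (fun t : ℝ => t • w) w 0 := by
    simpa using (hasDerivAt_id (0:ℝ)).smul_const w
  have h2 : HasFDerivAt f (fderiv ℝ f 0) ((0:ℝ) • w) := by
    rw [zero_smul]; exact hf.hasFDerivAt
  exact h2.comp_hasDerivAt 0 hc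

private lemma line_eventually_zero {f : ℝ → ℝ}
    (h1 : ∀ᶠ t in nhdsWithin (0:ℝ) {0}ᶜ, f t = 0) (hc : ContinuousAt f 0) :
    ∀ᶠ t in nhds (0:ℝ), f t = 0 := by
  have hf0 : f 0 = 0 := by
    have ha : Filter.Tendsto f (nhdsWithin (0:ℝ) {0}ᶜ) (nhds (f 0)) :=
      hc.continuousWithinAt.tendsto
    have hb : Filter.Tendsto f (nhdsWithin (0:ℝ) {0}ᶜ) (nhds 0) := by
      rw [Filter.tendsto_congr' h1]; exact tendsto_const_nhds
    exact tendsto_nhds_unique ha hb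
  rw [← nhdsNE_sup_pure, Filter.eventually_sup]
  exact ⟨h1, by simpa using hf0⟩

private lemma deriv_eq_zero_of_eventually_zero {f : ℝ → ℝ} {d : ℝ}
    (hd : HasDerivAt f d 0) (h : ∀ᶠ t in nhds (0:ℝ), f t = 0) : d = 0 := by
  have h0 : HasDerivAt f 0 0 :=
    (hasDerivAt_const (0:ℝ) (0:ℝ)).congr_of_eventuallyEq
      (by filter_upwards [h] with t ht; simp [ht])
  exact hd.unique h0

/-- The core ideal-membership obstruction: no differentiable `u, v, g` near `0`
with `g 0 > 0` can satisfy `u·x³ + v·y³ = g·x²y²` on a neighborhood of `0`. -/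
private lemma eliashberg_core {U : Set (EuclideanSpace ℝ (Fin 2))}
    {u v g : EuclideanSpace ℝ (Fin 2) → ℝ}
    (hU : U ∈ nhds (0 : EuclideanSpace ℝ (Fin 2)))
    (hu : DifferentiableAt ℝ u 0) (hv : DifferentiableAt ℝ v 0)
    (hg : DifferentiableAt ℝ g 0)
    (key : ∀ p ∈ U, u p * p 0 ^ 3 + v p * p 1 ^ 3 = g p * (p 0 ^ 2 * p 1 ^ 2))
    (hgpos : 0 < g 0) : False := by
  have hline : ∀ w : EuclideanSpace ℝ (Fin 2), ∀ᶠ t in nhds (0:ℝ), t • w ∈ U := by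
    intro w
    have hc : ContinuousAt (fun t : ℝ => t • w) 0 :=
      (continuous_id.smul continuous_const).continuousAt
    exact hc.preimage_mem_nhds (by rwa [zero_smul])
  have hcoord : ∀ (a b t : ℝ), (t • pv a b) 0 = t * a ∧ (t • pv a b) 1 = t * b := by
    intro a b t; exact ⟨rfl, rfl⟩
  -- x-axis: u vanishes along it
  have hax : ∀ᶠ t in nhds (0:ℝ), u (t • pv 1 0) = 0 := by
    apply line_eventually_zero
    · filter_upwards [(hline (pv 1 0)).filter_mono nhdsWithin_le_nhds,
        self_mem_nhdsWithin] with t ht ht0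
      have hk := key _ ht
      rw [(hcoord 1 0 t).1, (hcoord 1 0 t).2] at hk
      have ht3 : t ^ 3 ≠ 0 := pow_ne_zero _ (by simpa using ht0)
      have : u (t • pv 1 0) * t ^ 3 = 0 := by nlinarith [hk]
      rcases mul_eq_zero.mp this with h | h
      · exact h
      · exact absurd h ht3
    · exact (hasDerivAt_comp_line hu (pv 1 0)).continuousAt
  -- y-axis: v vanishes along it
  have hay : ∀ᶠ t in nhds (0:ℝ), v (t • pv 0 1) = 0 := by
    apply line_eventually_zero
    · filter_upwards [(hline (pv 0 1)).filter_mono nhdsWithin_le_nhds,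
        self_mem_nhdsWithin] with t ht ht0
      have hk := key _ ht
      rw [(hcoord 0 1 t).1, (hcoord 0 1 t).2] at hk
      have ht3 : t ^ 3 ≠ 0 := pow_ne_zero _ (by simpa using ht0)
      have : v (t • pv 0 1) * t ^ 3 = 0 := by nlinarith [hk]
      rcases mul_eq_zero.mp this with h | h
      · exact h
      · exact absurd h ht3
    · exact (hasDerivAt_comp_line hv (pv 0 1)).continuousAt
  have hu0 : u 0 = 0 := by
    have := hax.self_of_nhds; simpa [zero_smul] using this
  have hv0 : v 0 = 0 := by
    have := hay.self_of_nhds; simpa [zero_smul] using this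
  have hLu0 : fderiv ℝ u 0 (pv 1 0) = 0 :=
    deriv_eq_zero_of_eventually_zero (hasDerivAt_comp_line hu (pv 1 0)) hax
  have hLv1 : fderiv ℝ v 0 (pv 0 1) = 0 :=
    deriv_eq_zero_of_eventually_zero (hasDerivAt_comp_line hv (pv 0 1)) hay
  -- general slanted line t ↦ (t, s*t)
  have hdiag : ∀ s : ℝ,
      fderiv ℝ u 0 (pv 1 s) + s ^ 3 * fderiv ℝ v 0 (pv 1 s) = s ^ 2 * g 0 := by
    intro s
    set w : EuclideanSpace ℝ (Fin 2) := pv 1 s with hw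
    have hD : HasDerivAt
        (fun t : ℝ => u (t • w) + s ^ 3 * v (t • w) - s ^ 2 * (t * g (t • w)))
        (fderiv ℝ u 0 w + s ^ 3 * fderiv ℝ v 0 w -
          s ^ 2 * (1 * g ((0:ℝ) • w) + 0 * fderiv ℝ g 0 w)) 0 := by
      exact ((hasDerivAt_comp_line hu w).add
        ((hasDerivAt_comp_line hv w).const_mul (s ^ 3))).sub
        (((hasDerivAt_id (0:ℝ)).mul (hasDerivAt_comp_line hg w)).const_mul (s ^ 2))
    have hev : ∀ᶠ t in nhds (0:ℝ),
        u (t • w) + s ^ 3 * v (t • w) - s ^ 2 * (t * g (t • w)) = 0 := by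
      apply line_eventually_zero
      · filter_upwards [(hline w).filter_mono nhdsWithin_le_nhds,
          self_mem_nhdsWithin] with t ht ht0
        have hk := key _ ht
        rw [hw] at hk ⊢
        rw [(hcoord 1 s t).1, (hcoord 1 s t).2] at hk
        have ht3 : t ^ 3 ≠ 0 := pow_ne_zero _ (by simpa using ht0)
        have h2 : (u (t • pv 1 s) + s ^ 3 * v (t • pv 1 s) -
            s ^ 2 * (t * g (t • pv 1 s))) * t ^ 3 = 0 := by ring_nf; nlinarith [hk]
        rcases mul_eq_zero.mp h2 with h | h
        · exact h
        · exact absurd h ht3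
      · exact hD.continuousAt
    have := deriv_eq_zero_of_eventually_zero hD hev
    rw [zero_smul] at this
    linarith [this]
  have h1 := hdiag 1
  have h2 := hdiag (-1)
  -- expand pv 1 1 and pv 1 (-1)
  have e11 : pv 1 1 = pv 1 0 + pv 0 1 := by
    rw [pv_decomp 1 1]; simp
  have e1m1 : pv 1 (-1) = pv 1 0 - pv 0 1 := by
    ext i; fin_cases i <;> simp [pv]
  rw [e11] at h1
  rw [e1m1] at h2
  simp only [map_add, map_sub, hLu0, hLv1] at h1 h2
  nlinarith [h1, h2, hgpos]

end EliashbergAux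

open RealInnerProductSpace in
theorem eliashberg_example_not_gradlike :
    ¬ ∃ (U : Set (EuclideanSpace ℝ (Fin 2)))
        (G : EuclideanSpace ℝ (Fin 2) →
          (EuclideanSpace ℝ (Fin 2) →L[ℝ] EuclideanSpace ℝ (Fin 2))),
      U ∈ nhds (0 : EuclideanSpace ℝ (Fin 2)) ∧ ContDiffOn ℝ (⊤ : ℕ∞) G U ∧
        ∀ p ∈ U,
          (∀ v : EuclideanSpace ℝ (Fin 2), v ≠ 0 → 0 < ⟪G p v, v⟫) ∧
          G p ((WithLp.equiv 2 (Fin 2 → ℝ)).symm ![p 0 ^ 3 + p 0 ^ 2 * p 1 ^ 2, p 1 ^ 3]) =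
            (WithLp.equiv 2 (Fin 2 → ℝ)).symm ![p 0 ^ 3, p 1 ^ 3] := by
  rintro ⟨U, G, hU, hG, hmain⟩
  have h0U : (0 : EuclideanSpace ℝ (Fin 2)) ∈ U := mem_of_mem_nhds hU
  have hGd : DifferentiableAt ℝ G 0 :=
    (hG.differentiableOn (by simp)).differentiableAt hU
  set g00 : EuclideanSpace ℝ (Fin 2) → ℝ := fun p => (G p (pv 1 0)) 0 with hg00
  set g01 : EuclideanSpace ℝ (Fin 2) → ℝ := fun p => (G p (pv 0 1)) 0 with hg01
  have hg00d : DifferentiableAt ℝ g00 0 := by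
    rw [hg00]
    exact ((EuclideanSpace.proj (0 : Fin 2)).differentiableAt).comp 0
      (hGd.clm_apply (differentiableAt_const (pv 1 0)))
  have hg01d : DifferentiableAt ℝ g01 0 := by
    rw [hg01]
    exact ((EuclideanSpace.proj (0 : Fin 2)).differentiableAt).comp 0
      (hGd.clm_apply (differentiableAt_const (pv 0 1)))
  -- positivity at the origin
  have hposv : (pv 1 0 : EuclideanSpace ℝ (Fin 2)) ≠ 0 := by
    intro h
    have h0 : (pv 1 0) 0 = (0 : EuclideanSpace ℝ (Fin 2)) 0 := by rw [h]
    simp [pv] at h0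
  have hgpos : 0 < g00 0 := by
    have hp := (hmain 0 h0U).1 (pv 1 0) hposv
    have hin : ⟪G 0 (pv 1 0), pv 1 0⟫ = g00 0 := by
      simp [PiLp.inner_apply, Fin.sum_univ_two, pv, hg00]
    linarith [hp, hin.ge, hin.le]
  -- the scalar key identity
  have key : ∀ p ∈ U,
      (1 - g00 p) * p 0 ^ 3 + (-(g01 p)) * p 1 ^ 3 = g00 p * (p 0 ^ 2 * p 1 ^ 2) := by
    intro p hp
    have h := (hmain p hp).2
    have h0 := congrArg (fun x : EuclideanSpace ℝ (Fin 2) => x 0) h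
    rw [show ((WithLp.equiv 2 (Fin 2 → ℝ)).symm ![p 0 ^ 3 + p 0 ^ 2 * p 1 ^ 2, p 1 ^ 3]) =
        (p 0 ^ 3 + p 0 ^ 2 * p 1 ^ 2) • pv 1 0 + (p 1 ^ 3) • pv 0 1 from pv_decomp _ _] at h0
    have h1 : (p 0 ^ 3 + p 0 ^ 2 * p 1 ^ 2) * g00 p + p 1 ^ 3 * g01 p = p 0 ^ 3 := by
      simpa [pv, hg00, hg01] using h0
    nlinarith [h1]
  exact eliashberg_core hU ((differentiableAt_const (1:ℝ)).sub hg00d) hg01d.neg hg00d key hgpos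
end

section
/- Let f : ℝ → ℝ be real analytic with f(0) = 0, and let X : ℝ → ℝ be real analytic with X(0) = 0, such that f'(x)·X(x) ≥ δ(x)(X(x)² + f'(x)²) for some continuous δ > 0 on a neighborhood of 0. Then there exists a continuous function g > 0 on a (possibly smaller) neighborhood of 0 with f'(x) = g(x)·X(x). -/
/-!
The Lyapunov inequality gives `δ |f'| ≤ |X|` and `δ |X| ≤ |f'|`, so `f'` and `X` vanish to the
same order `n` at `0`: either both vanish identically near `0` (take `g = 1`), or
`f' = xⁿ a` and `X = xⁿ b` with `a 0 ≠ 0 ≠ b 0`. Then `g = a / b` is continuous near `0`, and it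
is positive because `f' X ≥ 0` forces `a b ≥ 0` off `0`, hence `a 0 b 0 > 0`.
-/

open Filter Topology Asymptotics

theorem mul_abs_le_abs_of_mul_sq_add_sq_le_mul {d u v : ℝ} (h : d * (u ^ 2 + v ^ 2) ≤ u * v) :
    d * |u| ≤ |v| := by
  rcases le_or_gt d 0 with hd | hd
  · exact (mul_nonpos_of_nonpos_of_nonneg hd (abs_nonneg u)).trans (abs_nonneg v)
  rcases eq_or_ne u 0 with rfl | hu
  · simp
  have huv : |u| * (d * |u|) ≤ |u| * |v| := calc
    |u| * (d * |u|) = d * u ^ 2 := by rw [← sq_abs u]; ring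
    _ ≤ d * (u ^ 2 + v ^ 2) := by nlinarith [sq_nonneg v]
    _ ≤ u * v := h
    _ ≤ |u| * |v| := by rw [← abs_mul]; exact le_abs_self _
  exact le_of_mul_le_mul_left huv (abs_pos.mpr hu)

theorem isTheta_of_mul_sq_add_sq_le_mul {α : Type*} {l : Filter α} {u v δ : α → ℝ} {d : ℝ}
    (hd : 0 < d) (hδ : ∀ᶠ x in l, d ≤ δ x) (h : ∀ᶠ x in l, δ x * (u x ^ 2 + v x ^ 2) ≤ u x * v x) :
    u =Θ[l] v := by
  have key : ∀ᶠ x in l, d * |u x| ≤ |v x| ∧ d * |v x| ≤ |u x| := by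
    filter_upwards [hδ, h] with x hδx hx
    have hu := mul_abs_le_abs_of_mul_sq_add_sq_le_mul hx
    have hv := mul_abs_le_abs_of_mul_sq_add_sq_le_mul (d := δ x) (u := v x) (v := u x)
      (by rwa [add_comm, mul_comm (v x)])
    exact ⟨(mul_le_mul_of_nonneg_right hδx (abs_nonneg _)).trans hu,
      (mul_le_mul_of_nonneg_right hδx (abs_nonneg _)).trans hv⟩
  exact ⟨((isBigOWith_inv hd).mpr (key.mono fun _ h ↦ h.1)).isBigO,
    ((isBigOWith_inv hd).mpr (key.mono fun _ h ↦ h.2)).isBigO⟩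

section AnalyticOrder

variable {𝕜 E F : Type*} [NontriviallyNormedField 𝕜] [NormedAddCommGroup E] [NormedSpace 𝕜 E]
  [NormedAddCommGroup F] [NormedSpace 𝕜 F] {f : 𝕜 → E} {g : 𝕜 → F} {z₀ : 𝕜}

theorem Asymptotics.IsBigO.analyticOrderAt_le (hf : AnalyticAt 𝕜 f z₀) (hg : AnalyticAt 𝕜 g z₀)
    (hfg : f =O[𝓝 z₀] g) : analyticOrderAt g z₀ ≤ analyticOrderAt f z₀ := by
  by_contra! hlt
  obtain ⟨m, hm⟩ := ENat.ne_top_iff_exists.mp hlt.ne_top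
  obtain ⟨a, ha, ha0, hfa⟩ := hf.analyticOrderAt_eq_natCast.mp hm.symm
  obtain ⟨b, hb, hgb⟩ := (natCast_le_analyticOrderAt hg (n := m + 1)).mp
    (by exact_mod_cast Order.add_one_le_of_lt (hm ▸ hlt))
  obtain ⟨C, hC⟩ := hfg.bound
  -- dividing `‖f‖ ≤ C ‖g‖` by `‖z - z₀‖ ^ m` leaves `‖a z‖ ≤ C ‖z - z₀‖ ‖b z‖`
  have hab : ∀ᶠ z in 𝓝[≠] z₀, ‖a z‖ ≤ C * (‖z - z₀‖ * ‖b z‖) := by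
    filter_upwards [self_mem_nhdsWithin, nhdsWithin_le_nhds hC, nhdsWithin_le_nhds hfa,
      nhdsWithin_le_nhds hgb] with z hz hCz hfz hgz
    have hpos : 0 < ‖z - z₀‖ ^ m := pow_pos (norm_pos_iff.mpr (sub_ne_zero_of_ne hz)) m
    rw [hfz, hgz, norm_smul, norm_smul, pow_succ, norm_mul, norm_pow] at hCz
    exact le_of_mul_le_mul_left (by linarith) hpos
  have hlim : Tendsto (fun z ↦ C * (‖z - z₀‖ * ‖b z‖)) (𝓝[≠] z₀) (𝓝 0) := by
    have : ContinuousAt (fun z ↦ C * (‖z - z₀‖ * ‖b z‖)) z₀ := by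
      have := hb.continuousAt; fun_prop
    simpa using this.tendsto.mono_left nhdsWithin_le_nhds
  have ha_le := le_of_tendsto_of_tendsto
    (ha.continuousAt.norm.tendsto.mono_left nhdsWithin_le_nhds) hlim hab
  exact ha0 (norm_le_zero_iff.mp ha_le)

theorem Asymptotics.IsTheta.analyticOrderAt_eq (hf : AnalyticAt 𝕜 f z₀) (hg : AnalyticAt 𝕜 g z₀)
    (hfg : f =Θ[𝓝 z₀] g) : analyticOrderAt f z₀ = analyticOrderAt g z₀ :=
  le_antisymm (hfg.2.analyticOrderAt_le hg hf) (hfg.1.analyticOrderAt_le hf hg)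

end AnalyticOrder

theorem exists_pos_continuousOn_eq_mul_of_analyticOrderAt_eq {F G : ℝ → ℝ} {z₀ : ℝ}
    (hF : AnalyticAt ℝ F z₀) (hG : AnalyticAt ℝ G z₀)
    (hFG : analyticOrderAt F z₀ = analyticOrderAt G z₀) (hnonneg : ∀ᶠ x in 𝓝 z₀, 0 ≤ F x * G x) :
    ∃ V ∈ 𝓝 z₀, ∃ g : ℝ → ℝ, ContinuousOn g V ∧ (∀ x ∈ V, 0 < g x) ∧
      ∀ x ∈ V, F x = g x * G x := by
  rcases eq_or_ne (analyticOrderAt G z₀) ⊤ with htop | htop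
  · obtain ⟨V, hV, hzero⟩ := ((analyticOrderAt_eq_top.mp (hFG ▸ htop)).and
      (analyticOrderAt_eq_top.mp htop)).exists_mem
    exact ⟨V, hV, 1, continuousOn_const, fun _ _ ↦ one_pos,
      fun x hx ↦ by simp [(hzero x hx).1, (hzero x hx).2]⟩
  obtain ⟨n, hn⟩ := ENat.ne_top_iff_exists.mp htop
  obtain ⟨a, ha, ha0, hFa⟩ := hF.analyticOrderAt_eq_natCast.mp (hFG.trans hn.symm)
  obtain ⟨b, hb, hb0, hGb⟩ := hG.analyticOrderAt_eq_natCast.mp hn.symm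
  -- `F G = (x - z₀) ^ (2 n) a b`, so `a b ≥ 0` off `z₀`, and `a b ≠ 0` at `z₀`
  have hab_nonneg : ∀ᶠ x in 𝓝[≠] z₀, 0 ≤ a x * b x := by
    filter_upwards [self_mem_nhdsWithin, nhdsWithin_le_nhds hnonneg, nhdsWithin_le_nhds hFa,
      nhdsWithin_le_nhds hGb] with x hx hFGx hFx hGx
    rw [hFx, hGx, smul_eq_mul, smul_eq_mul, mul_mul_mul_comm, ← sq] at hFGx
    have hpow : (x - z₀) ^ n ≠ 0 := pow_ne_zero n (sub_ne_zero_of_ne hx)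
    exact (mul_nonneg_iff_of_pos_left (by positivity)).mp hFGx
  have hab : 0 < a z₀ * b z₀ :=
    (ge_of_tendsto ((ha.continuousAt.mul hb.continuousAt).tendsto.mono_left nhdsWithin_le_nhds)
      hab_nonneg).lt_of_ne (mul_ne_zero ha0 hb0).symm
  have hquot : ∀ᶠ x in 𝓝 z₀, ContinuousAt (fun x ↦ a x / b x) x ∧ 0 < a x / b x ∧
      F x = a x / b x * G x := by
    filter_upwards [ha.eventually_analyticAt, hb.eventually_analyticAt, hFa, hGb,
      (ha.continuousAt.mul hb.continuousAt).eventually (eventually_gt_nhds hab)]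
      with x hax hbx hFx hGx habx
    have hbx0 : b x ≠ 0 := right_ne_zero_of_mul habx.ne'
    refine ⟨hax.continuousAt.div hbx.continuousAt hbx0, div_pos_iff.mpr (mul_pos_iff.mp habx), ?_⟩
    rw [hFx, hGx, smul_eq_mul, smul_eq_mul]
    field_simp
  obtain ⟨V, hV, hgV⟩ := hquot.exists_mem
  exact ⟨V, hV, fun x ↦ a x / b x, fun x hx ↦ (hgV x hx).1.continuousWithinAt,
    fun x hx ↦ (hgV x hx).2.1, fun x hx ↦ (hgV x hx).2.2⟩

theorem analytic_dim1_Lyapunov_implies_gradlike_general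
    (f X : ℝ → ℝ) (hf : ∀ x : ℝ, AnalyticAt ℝ f x) (hX : ∀ x : ℝ, AnalyticAt ℝ X x)
    (U : Set ℝ) (hU : U ∈ nhds (0 : ℝ)) (δ : ℝ → ℝ)
    (hδc : ContinuousOn δ U) (hδpos : ∀ x ∈ U, 0 < δ x)
    (hLyap : ∀ x ∈ U, deriv f x * X x ≥ δ x * ((X x) ^ 2 + (deriv f x) ^ 2)) :
    ∃ V ∈ nhds (0 : ℝ), ∃ g : ℝ → ℝ, ContinuousOn g V ∧ (∀ x ∈ V, 0 < g x) ∧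
      ∀ x ∈ V, deriv f x = g x * X x := by
  have hf' : AnalyticAt ℝ (deriv f) 0 := (hf 0).deriv
  have hδ0 : 0 < δ 0 := hδpos 0 (mem_of_mem_nhds hU)
  have hδ : ∀ᶠ x in 𝓝 0, δ 0 / 2 ≤ δ x :=
    ((hδc.continuousAt hU).eventually (eventually_gt_nhds (half_lt_self hδ0))).mono
      fun _ ↦ le_of_lt
  have hLyap' : ∀ᶠ x in 𝓝 0, δ x * (deriv f x ^ 2 + X x ^ 2) ≤ deriv f x * X x :=
    eventually_of_mem hU fun x hx ↦ (by ring : _ = _).trans_le (hLyap x hx)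
  have hnonneg : ∀ᶠ x in 𝓝 0, 0 ≤ deriv f x * X x :=
    eventually_of_mem hU fun x hx ↦
      (mul_nonneg (hδpos x hx).le (by positivity)).trans (hLyap x hx)
  have hord : analyticOrderAt (deriv f) 0 = analyticOrderAt X 0 :=
    (isTheta_of_mul_sq_add_sq_le_mul (half_pos hδ0) hδ hLyap').analyticOrderAt_eq hf' (hX 0)
  exact exists_pos_continuousOn_eq_mul_of_analyticOrderAt_eq hf' (hX 0) hord hnonneg

theorem analytic_dim1_Lyapunov_implies_gradlike
    (f X : ℝ → ℝ) (hf : ∀ x : ℝ, AnalyticAt ℝ f x) (hX : ∀ x : ℝ, AnalyticAt ℝ X x)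
    (hf0 : f 0 = 0) (hX0 : X 0 = 0)
    (U : Set ℝ) (hU : U ∈ nhds (0 : ℝ)) (δ : ℝ → ℝ)
    (hδc : ContinuousOn δ U) (hδpos : ∀ x ∈ U, 0 < δ x)
    (hLyap : ∀ x ∈ U, deriv f x * X x ≥ δ x * ((X x) ^ 2 + (deriv f x) ^ 2)) :
    ∃ V ∈ nhds (0 : ℝ), ∃ g : ℝ → ℝ, ContinuousOn g V ∧ (∀ x ∈ V, 0 < g x) ∧
      ∀ x ∈ V, deriv f x = g x * X x :=
  analytic_dim1_Lyapunov_implies_gradlike_general f X hf hX U hU δ hδc hδpos hLyap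
end
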